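/- Let M be a compact complex manifold of complex dimension m and ω ∈ Ω¹(M, V) a branched holomorphic co-parallelism. Then the branching locus of ω is either empty or it is the support of an effective divisor on M representing the canonical class of M; namely it equals the vanishing divisor of the holomorphic section ω_1 ∧ … ∧ ω_m of the canonical bundle K_M, where ω_1, …, ω_m are the components of ω in any basis of V. -/

import Mathlib

open Manifold Set Function

noncomputable section



/-! ### Basic machinery for holomorphic one-forms on complex manifolds -/

section Core

variable {F H M : Type*} [NormedAddCommGroup F] [NormedSpace ℂ F] [TopologicalSpace H]
  (I : ModelWithCorners ℂ F H) [TopologicalSpace M] [ChartedSpace H M]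
variable {V : Type*} [NormedAddCommGroup V] [NormedSpace ℂ V]

/-- The local representative (pullback by the inverse of the extended chart at `x`)
of a `V`-valued one-form `ω` on `M`. -/
def oneFormLocalRepr (ω : M → (F →L[ℂ] V)) (x : M) : F → (F →L[ℂ] V) :=
  fun y => (ω ((extChartAt I x).symm y)).comp
    (mfderiv 𝓘(ℂ, F) I (extChartAt I x).symm y)

/-- A `V`-valued one-form on the complex manifold `M` is holomorphic if all its local
representatives in the holomorphic charts are holomorphic. -/
def IsHolomorphicOneForm (ω : M → (F →L[ℂ] V)) : Prop :=
  ∀ x : M, DifferentiableOn ℂ (oneFormLocalRepr I ω x) (extChartAt I x).target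

/-- holomorphy of a one-form on an open subset `U` of `M`. -/
def IsHolomorphicOneFormOn (ω : M → (F →L[ℂ] V)) (U : Set M) : Prop :=
  ∀ x ∈ U, DifferentiableOn ℂ (oneFormLocalRepr I ω x)
    ((extChartAt I x).target ∩ ((extChartAt I x).symm ⁻¹' U))

/-- The exterior derivative of a one-form, evaluated at `x` on tangent vectors `u, v`,
computed in the chart at `x`. -/
def extDerivOneForm (ω : M → (F →L[ℂ] V)) (x : M) (u v : F) : V :=
  fderiv ℂ (oneFormLocalRepr I ω x) (extChartAt I x x) u v -
    fderiv ℂ (oneFormLocalRepr I ω x) (extChartAt I x x) v u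

/-- A holomorphic parallelization: the one-form is a fiberwise linear isomorphism at
every point. -/
def IsParallelization (ω : M → (F →L[ℂ] V)) : Prop :=
  IsHolomorphicOneForm I ω ∧ ∀ x : M, Function.Bijective (ω x)

/-- A branched holomorphic co-parallelism: the one-form is a fiberwise linear isomorphism
at all points of a dense subset. -/
def IsBranchedCoparallelism (ω : M → (F →L[ℂ] V)) : Prop :=
  IsHolomorphicOneForm I ω ∧ Dense {x : M | Function.Bijective (ω x)}

end Core

/-- A complex Lie algebra structure on a complex vector space `V`. -/
structure LieAlgStructure (V : Type*) [AddCommGroup V] [Module ℂ V] where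
  bracket : V →ₗ[ℂ] V →ₗ[ℂ] V
  alt : ∀ a : V, bracket a a = 0
  jacobi : ∀ a b c : V,
    bracket a (bracket b c) + bracket b (bracket c a) + bracket c (bracket a b) = 0

/-- The abelian Lie algebra structure on `V`. -/
def abelianLieAlgStructure (V : Type*) [AddCommGroup V] [Module ℂ V] :
    LieAlgStructure V where
  bracket := 0
  alt := by intro a; simp
  jacobi := by intro a b c; simp

section Flat

variable {F H M : Type*} [NormedAddCommGroup F] [NormedSpace ℂ F] [TopologicalSpace H]
  (I : ModelWithCorners ℂ F H) [TopologicalSpace M] [ChartedSpace H M]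
variable {V : Type*} [NormedAddCommGroup V] [NormedSpace ℂ V]

/-- `ω` is flat with respect to the complex Lie algebra structure `L` on `V`: it satisfies
the Maurer-Cartan equation `dω + ½[ω, ω]_L = 0`. -/
def IsFlatWrt (ω : M → (F →L[ℂ] V)) (L : LieAlgStructure V) : Prop :=
  ∀ (x : M) (u v : F),
    extDerivOneForm I ω x u v + L.bracket (ω x u) (ω x v) = 0

/-- Local representative (pushforward by the extended chart at `x`) of a vector field,
where tangent spaces are identified with the model vector space `F`. -/
def vfLocalRepr (X : M → F) (x : M) : F → F :=
  fun y => mfderiv I 𝓘(ℂ, F) (extChartAt I x) ((extChartAt I x).symm y)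
    (X ((extChartAt I x).symm y))

/-- A vector field on `M` (with tangent spaces identified with `F`) is holomorphic if its
local representatives are. -/
def IsHolomorphicVF (X : M → F) : Prop :=
  ∀ x : M, DifferentiableOn ℂ (vfLocalRepr I X x) (extChartAt I x).target

/-- The Lie bracket of two vector fields, computed in the chart at `x`. -/
def vfBracket (X Y : M → F) (x : M) : F :=
  mfderiv 𝓘(ℂ, F) I (extChartAt I x).symm (extChartAt I x x)
    (fderiv ℂ (vfLocalRepr I Y x) (extChartAt I x x)
        (vfLocalRepr I X x (extChartAt I x x)) -
      fderiv ℂ (vfLocalRepr I X x) (extChartAt I x x)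
        (vfLocalRepr I Y x (extChartAt I x x)))

/-- The pullback of a one-form under a map of complex manifolds. -/
def pullbackOneForm {F' H' N : Type*} [NormedAddCommGroup F'] [NormedSpace ℂ F']
    [TopologicalSpace H'] (I' : ModelWithCorners ℂ F' H') [TopologicalSpace N]
    [ChartedSpace H' N] (f : M → N) (ω : N → (F' →L[ℂ] V)) : M → (F →L[ℂ] V) :=
  fun x => (ω (f x)).comp (mfderiv I I' f x)

end Flat

section KSection

variable {F H M : Type*} [NormedAddCommGroup F] [NormedSpace ℂ F] [TopologicalSpace H]
  (I : ModelWithCorners ℂ F H) [TopologicalSpace M] [ChartedSpace H M]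

/-- Local representative of a section of the canonical bundle `K_M`; a section is encoded
by its coefficient function `t : M → ℂ` with respect to the determinant form in the charts,
and the local representative includes the Jacobian twist. -/
def kSectionLocalRepr (t : M → ℂ) (x : M) : F → ℂ :=
  fun y => t ((extChartAt I x).symm y) *
    LinearMap.det
      ((show F →L[ℂ] F from mfderiv 𝓘(ℂ, F) I (extChartAt I x).symm y) : F →ₗ[ℂ] F)

/-- `t` is (the coefficient function of) a holomorphic section of the canonical bundle. -/
def IsHolomorphicKSection (t : M → ℂ) : Prop :=
  ∀ x : M, DifferentiableOn ℂ (kSectionLocalRepr I t x) (extChartAt I x).target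

end KSection



section Kaehler

variable {F H : Type*} [NormedAddCommGroup F] [NormedSpace ℂ F] [TopologicalSpace H]
  (I : ModelWithCorners ℂ F H) {M : Type*} [TopologicalSpace M] [ChartedSpace H M]

/-- Local representative of a real 2-form on the complex manifold `M` in the chart at `x`. -/
def twoFormLocalRepr (g : M → (F →L[ℝ] F →L[ℝ] ℝ)) (x : M) : F → F → F → ℝ :=
  fun y u v => g ((extChartAt I x).symm y)
    (mfderiv 𝓘(ℂ, F) I (extChartAt I x).symm y u)
    (mfderiv 𝓘(ℂ, F) I (extChartAt I x).symm y v)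

/-- A Kähler structure on the complex manifold `M`: a smooth closed real `(1,1)`-form which is
positive with respect to the complex structure (multiplication by `Complex.I` on the tangent
spaces, which are identified with the model space `F`). -/
structure KaehlerStructure (M : Type*) [TopologicalSpace M] [ChartedSpace H M] : Type _ where
  form : M → (F →L[ℝ] F →L[ℝ] ℝ)
  smooth : ∀ (x : M) (u v : F),
    ContDiffOn ℝ (⊤ : ℕ∞) (fun y => twoFormLocalRepr I form x y u v) (extChartAt I x).target
  alternating : ∀ (x : M) (u : F), form x u u = 0
  compat : ∀ (x : M) (u v : F),
    form x ((Complex.I : ℂ) • u) ((Complex.I : ℂ) • v) = form x u v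
  positive : ∀ (x : M) (u : F), u ≠ 0 → 0 < form x u ((Complex.I : ℂ) • u)
  closed : ∀ (x : M) (u v w : F),
    fderiv ℝ (fun y => twoFormLocalRepr I form x y v w) (extChartAt I x x) u -
      fderiv ℝ (fun y => twoFormLocalRepr I form x y u w) (extChartAt I x x) v +
      fderiv ℝ (fun y => twoFormLocalRepr I form x y u v) (extChartAt I x x) w = 0

end Kaehler

section Meromorphic

variable {F H : Type*} [NormedAddCommGroup F] [NormedSpace ℂ F] [TopologicalSpace H]
  (I : ModelWithCorners ℂ F H)

/-- A meromorphic function on the complex manifold `M`: a function holomorphic on a dense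
open subset which is locally a quotient of holomorphic functions. -/
structure MeromorphicFunctionOn (M : Type*) [TopologicalSpace M] [ChartedSpace H M] : Type _ where
  toFun : M → ℂ
  dom : Set M
  isOpen_dom : IsOpen dom
  dense_dom : Dense dom
  holo : MDifferentiableOn I 𝓘(ℂ, ℂ) toFun dom
  locally_quotient : ∀ x : M, ∃ (W : Set M) (g h : M → ℂ), IsOpen W ∧ x ∈ W ∧
    MDifferentiableOn I 𝓘(ℂ, ℂ) g W ∧ MDifferentiableOn I 𝓘(ℂ, ℂ) h W ∧
    ∀ y ∈ W ∩ dom, h y ≠ 0 ∧ toFun y * h y = g y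

/-- The complex manifold `M` has algebraic dimension zero: every meromorphic function on it
is constant. -/
def AlgDimZero (M : Type*) [TopologicalSpace M] [ChartedSpace H M] : Prop :=
  ∀ f : MeromorphicFunctionOn I M, ∃ c : ℂ, ∀ x ∈ f.dom, f.toFun x = c

end Meromorphic

section Fujiki

variable {F H : Type*} [NormedAddCommGroup F] [NormedSpace ℂ F] [TopologicalSpace H]

/-- The compact complex manifold `M` belongs to the Fujiki class `𝒞`: there is a compact
Kähler manifold `N` and a holomorphic modification (a surjective holomorphic map which is a
bimeromorphism) from `N` onto `M`. -/
def InFujikiClass (I : ModelWithCorners ℂ F H) (M : Type*) [TopologicalSpace M]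
    [ChartedSpace H M] : Prop :=
  ∃ (N : Type) (_ : TopologicalSpace N) (_ : ChartedSpace H N)
    (_ : IsManifold I (⊤ : ℕ∞) N), CompactSpace N ∧
      Nonempty (KaehlerStructure I N) ∧
      ∃ f : N → M, MDifferentiable I I f ∧ Function.Surjective f ∧
        ∃ U : Set M, IsOpen U ∧ Dense U ∧ Dense (f ⁻¹' U) ∧ Set.BijOn f (f ⁻¹' U) U

end Fujiki

open scoped commutatorElement in
/-- The canonical relator of the genus-`g` surface group: the product of the commutators
of the `2g` generators. -/
def surfaceRelator (g : ℕ) : FreeGroup (Fin g × Bool) :=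
  (List.ofFn fun i : Fin g => ⁅FreeGroup.of (i, true), FreeGroup.of (i, false)⁆).prod

/-- The fundamental group of the closed orientable surface of genus `g`. -/
def SurfaceGroup (g : ℕ) :=
  PresentedGroup ({surfaceRelator g} : Set (FreeGroup (Fin g × Bool)))

instance (g : ℕ) : Group (SurfaceGroup g) := by unfold SurfaceGroup; infer_instance

/-- A topological space has genus `g` if its fundamental group is the genus-`g`
surface group. -/
def HasGenus (S : Type*) [TopologicalSpace S] (g : ℕ) : Prop :=
  ∀ x : S, Nonempty (FundamentalGroup S x ≃* SurfaceGroup g)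

/-- The lattice of Gaussian integers `ℤ ⊕ iℤ` inside `ℂ`. -/
def gaussianLattice : Set ℂ :=
  {z : ℂ | ∃ a b : ℤ, z = (a : ℂ) + (b : ℂ) * Complex.I}



section PrincipalBundle

variable {FE HE FP HP FB HB : Type*}
  [NormedAddCommGroup FE] [NormedSpace ℂ FE] [TopologicalSpace HE]
  [NormedAddCommGroup FP] [NormedSpace ℂ FP] [TopologicalSpace HP]
  [NormedAddCommGroup FB] [NormedSpace ℂ FB] [TopologicalSpace HB]

/-- `π : P → B`, together with the action `ρ` of the additive complex Lie group `E`, is a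
holomorphic principal bundle with structure group `E`: the projection and the action are
holomorphic, the action is free and simply transitive on the fibers of `π`, and there exist
holomorphic local sections through every point of the base. -/
structure IsHolPrincipalBundle
    (IE : ModelWithCorners ℂ FE HE) (IP : ModelWithCorners ℂ FP HP)
    (IB : ModelWithCorners ℂ FB HB)
    {E P B : Type*} [AddGroup E] [TopologicalSpace E] [ChartedSpace HE E]
    [TopologicalSpace P] [ChartedSpace HP P] [TopologicalSpace B] [ChartedSpace HB B]
    (π : P → B) (ρ : E → P → P) : Prop where
  proj_smooth : MDifferentiable IP IB π
  proj_surj : Function.Surjective π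
  act_smooth : MDifferentiable (IE.prod IP) IP (fun q : E × P => ρ q.1 q.2)
  act_add : ∀ (e e' : E) (p : P), ρ (e + e') p = ρ e (ρ e' p)
  act_zero : ∀ p : P, ρ 0 p = p
  act_free : ∀ (e : E) (p : P), ρ e p = p → e = 0
  fiber : ∀ p q : P, π p = π q ↔ ∃ e : E, q = ρ e p
  local_section : ∀ b : B, ∃ (U : Set B) (s : B → P), IsOpen U ∧ b ∈ U ∧
    MDifferentiableOn IB IP s U ∧ ∀ b' ∈ U, π (s b') = b'

end PrincipalBundle

section LocHomog

variable {F H M : Type*} [NormedAddCommGroup F] [NormedSpace ℂ F] [TopologicalSpace H]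
  (I : ModelWithCorners ℂ F H) [TopologicalSpace M] [ChartedSpace H M]
variable {V : Type*} [NormedAddCommGroup V] [NormedSpace ℂ V]

/-- A one-form `ω` is locally homogeneous on `U ⊆ M` if any point of `U` can be moved to any
other point of `U` by a local biholomorphism preserving `ω`. -/
def IsLocallyHomogeneousOn (ω : M → (F →L[ℂ] V)) (U : Set M) : Prop :=
  ∀ x ∈ U, ∀ y ∈ U, ∃ (W W' : Set M) (f : M → M), IsOpen W ∧ x ∈ W ∧ IsOpen W' ∧
    MDifferentiableOn I I f W ∧ Set.BijOn f W W' ∧ f x = y ∧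
    ∀ z ∈ W, ∀ u : F, ω (f z) (mfderiv I I f z u) = ω z u

end LocHomog

section Heisenberg

/-- The multiplication of the complex Heisenberg group of unipotent upper triangular `3 × 3`
complex matrices, in coordinates: the matrix with first row `(1, a, c)` and
second row `(0, 1, b)` corresponds to `(a, b, c)`. -/
def heisMul (x y : ℂ × ℂ × ℂ) : ℂ × ℂ × ℂ :=
  (x.1 + y.1, x.2.1 + y.2.1, x.2.2 + y.2.2 + x.1 * y.2.1)

/-- Inversion in the complex Heisenberg group. -/
def heisInv (x : ℂ × ℂ × ℂ) : ℂ × ℂ × ℂ :=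
  (-x.1, -x.2.1, -x.2.2 + x.1 * x.2.1)

/-- The lattice of Heisenberg matrices with Gaussian integer entries. -/
def heisGaussian : Set (ℂ × ℂ × ℂ) :=
  {x | (∃ a b : ℤ, x.1 = (a : ℂ) + (b : ℂ) * Complex.I) ∧
       (∃ a b : ℤ, x.2.1 = (a : ℂ) + (b : ℂ) * Complex.I) ∧
       (∃ a b : ℤ, x.2.2 = (a : ℂ) + (b : ℂ) * Complex.I)}

/-- The Maurer-Cartan form of the complex Heisenberg group, in coordinates:
at the point `(a, b, c)` it sends the tangent vector `(u₁, u₂, u₃)` to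
`(u₁, u₂, u₃ - a • u₂)`. -/
def heisMaurerCartan (v : ℂ × ℂ × ℂ) : (ℂ × ℂ × ℂ) →L[ℂ] (ℂ × ℂ × ℂ) :=
  (ContinuousLinearMap.fst ℂ ℂ (ℂ × ℂ)).prod
    ((((ContinuousLinearMap.fst ℂ ℂ ℂ).comp (ContinuousLinearMap.snd ℂ ℂ (ℂ × ℂ)))).prod
      (((ContinuousLinearMap.snd ℂ ℂ ℂ).comp (ContinuousLinearMap.snd ℂ ℂ (ℂ × ℂ))) -
        v.1 • (((ContinuousLinearMap.fst ℂ ℂ ℂ).comp (ContinuousLinearMap.snd ℂ ℂ (ℂ × ℂ))))))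

/-- The three-dimensional complex Heisenberg Lie algebra structure on `ℂ³`:
`[(a, b, c), (a', b', c')] = (0, 0, a b' - a' b)`. -/
def heisLieAlgStructure : LieAlgStructure (ℂ × ℂ × ℂ) where
  bracket := LinearMap.mk₂ ℂ
    (fun x y => ((0 : ℂ), (0 : ℂ), x.1 * y.2.1 - y.1 * x.2.1))
    (by intro m₁ m₂ n; simp [Prod.ext_iff]; try ring)
    (by intro c m n; simp [Prod.ext_iff, Prod.smul_def]; try ring)
    (by intro m n₁ n₂; simp [Prod.ext_iff]; try ring)
    (by intro c m n; simp [Prod.ext_iff, Prod.smul_def]; try ring)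
  alt := by intro a; simp [LinearMap.mk₂_apply, Prod.ext_iff]; try ring
  jacobi := by
    intro a b c
    simp [LinearMap.mk₂_apply, Prod.ext_iff]
    try ring

end Heisenberg

/-- The coefficient function (with respect to the determinant in the charts and bases `b` of
`V` and `e` of the model space) of the section `ω₁ ∧ ⋯ ∧ ω_m` of the canonical bundle `K_M`
associated with a `V`-valued one-form `ω`. -/
def canonicalSectionOf {F H M : Type*} [NormedAddCommGroup F] [NormedSpace ℂ F]
    [TopologicalSpace H] (_I : ModelWithCorners ℂ F H) [TopologicalSpace M]
    [ChartedSpace H M] {V : Type*} [NormedAddCommGroup V] [NormedSpace ℂ V]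
    {ι : Type*} [Fintype ι] [DecidableEq ι]
    (ω : M → (F →L[ℂ] V)) (b : Module.Basis ι ℂ V) (e : Module.Basis ι ℂ F) : M → ℂ :=
  fun x => LinearMap.det
    ((e.equivFun.symm.toLinearMap).comp
      ((b.equivFun.toLinearMap).comp ((ω x : F →L[ℂ] V) : F →ₗ[ℂ] V)))

lemma aux_det_eq_zero_iff_not_bij {m : ℕ} (f : (Fin m → ℂ) →ₗ[ℂ] (Fin m → ℂ)) :
    LinearMap.det f = 0 ↔ ¬ Function.Bijective f := by
  constructor
  · intro h hb
    exact (isUnit_iff_ne_zero.1 (LinearEquiv.ofBijective f hb).isUnit_det') h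
  · intro h
    by_contra hd
    exact h (f.equivOfDetNeZero hd).bijective

lemma aux_differentiable_detA {m : ℕ} {V : Type*} [NormedAddCommGroup V] [NormedSpace ℂ V]
    [FiniteDimensional ℂ V] (A : V →ₗ[ℂ] (Fin m → ℂ)) :
    Differentiable ℂ
      (fun L : (Fin m → ℂ) →L[ℂ] V => LinearMap.det (A ∘ₗ (L : (Fin m → ℂ) →ₗ[ℂ] V))) := by
  have key : ∀ L : (Fin m → ℂ) →L[ℂ] V, LinearMap.det (A ∘ₗ (L : (Fin m → ℂ) →ₗ[ℂ] V)) =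
      ∑ σ : Equiv.Perm (Fin m), (Equiv.Perm.sign σ : ℂ) *
        ∏ i, A (L (Pi.single i 1)) (σ i) := by
    intro L
    rw [← LinearMap.det_toMatrix (Pi.basisFun ℂ (Fin m)), Matrix.det_apply']
    apply Finset.sum_congr rfl
    intro σ _
    simp [LinearMap.toMatrix_apply]
  rw [funext key]
  apply Differentiable.fun_sum
  intro σ _
  apply Differentiable.const_mul
  intro L
  have h : ∀ i ∈ Finset.univ, DifferentiableAt ℂ
      (fun L : (Fin m → ℂ) →L[ℂ] V => A (L (Pi.single i 1)) (σ i)) L := by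
    intro i _
    have h1 : Differentiable ℂ (fun L : (Fin m → ℂ) →L[ℂ] V => L (Pi.single i 1)) :=
      (ContinuousLinearMap.apply ℂ V (Pi.single i 1)).differentiable
    have h2 := (LinearMap.toContinuousLinearMap A).differentiable
    exact (((ContinuousLinearMap.proj (R := ℂ) (φ := fun _ : Fin m => ℂ)
      (σ i)).differentiable.comp h2).comp h1) L
  exact (HasFDerivAt.finset_prod (fun i hi => (h i hi).hasFDerivAt)).differentiableAt

/-- The branching locus of a branched holomorphic co-parallelism `ω` on a
compact complex manifold `M` is the vanishing set of the holomorphic section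
`ω₁ ∧ ⋯ ∧ ω_m` of the canonical bundle `K_M`; in particular it is either empty or the
support of an effective divisor representing the canonical class. -/
theorem branching_locus_is_canonical_divisor
    {m : ℕ} {M : Type*} [TopologicalSpace M] [ChartedSpace (Fin m → ℂ) M]
    [IsManifold 𝓘(ℂ, Fin m → ℂ) (⊤ : ℕ∞) M] [CompactSpace M]
    {V : Type*} [NormedAddCommGroup V] [NormedSpace ℂ V] [FiniteDimensional ℂ V]
    (hV : Module.finrank ℂ V = m)
    (ω : M → ((Fin m → ℂ) →L[ℂ] V))
    (hω : IsBranchedCoparallelism 𝓘(ℂ, Fin m → ℂ) ω)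
    (b : Module.Basis (Fin m) ℂ V) :
    IsHolomorphicKSection 𝓘(ℂ, Fin m → ℂ)
      (canonicalSectionOf 𝓘(ℂ, Fin m → ℂ) ω b (Pi.basisFun ℂ (Fin m))) ∧
    {x : M | ¬ Function.Bijective (ω x)} =
      {x : M | canonicalSectionOf 𝓘(ℂ, Fin m → ℂ) ω b (Pi.basisFun ℂ (Fin m)) x = 0} := by
  
  set I := 𝓘(ℂ, Fin m → ℂ)
  set e := Pi.basisFun ℂ (Fin m)
  set A : V →ₗ[ℂ] (Fin m → ℂ) :=
    (e.equivFun.symm.toLinearMap).comp (b.equivFun.toLinearMap) with hA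
  have hcan : ∀ x : M, canonicalSectionOf I ω b e x =
      LinearMap.det (A ∘ₗ ((ω x : (Fin m → ℂ) →L[ℂ] V) : (Fin m → ℂ) →ₗ[ℂ] V)) := by
    intro x
    simp only [canonicalSectionOf, hA, LinearMap.comp_assoc]
  constructor
  · intro x
    have hrepr : kSectionLocalRepr I (canonicalSectionOf I ω b e) x =
        fun y => LinearMap.det
          (A ∘ₗ ((oneFormLocalRepr I ω x y : (Fin m → ℂ) →L[ℂ] V) : (Fin m → ℂ) →ₗ[ℂ] V)) := by
      funext y
      rw [kSectionLocalRepr, hcan]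
      rw [show ((oneFormLocalRepr I ω x y : (Fin m → ℂ) →L[ℂ] V) : (Fin m → ℂ) →ₗ[ℂ] V) =
        ((ω ((extChartAt I x).symm y) : (Fin m → ℂ) →L[ℂ] V) : (Fin m → ℂ) →ₗ[ℂ] V) ∘ₗ
        ((show (Fin m → ℂ) →L[ℂ] (Fin m → ℂ) from
            mfderiv 𝓘(ℂ, Fin m → ℂ) I (extChartAt I x).symm y) : (Fin m → ℂ) →ₗ[ℂ] (Fin m → ℂ))
        from rfl]
      rw [← LinearMap.comp_assoc, LinearMap.det_comp]
    rw [hrepr]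
    exact (aux_differentiable_detA A).comp_differentiableOn (hω.1 x)
  · ext x
    simp only [Set.mem_setOf_eq, hcan]
    rw [aux_det_eq_zero_iff_not_bij]
    have hAbij : Function.Bijective A := by
      have : Function.Bijective (e.equivFun.symm ∘ b.equivFun) :=
        e.equivFun.symm.bijective.comp b.equivFun.bijective
      exact this
    constructor
    · intro h hb
      exact h ((Function.Bijective.of_comp_iff' hAbij (⇑(ω x))).1 hb)
    · intro h hb
      exact h (hAbij.comp hb)
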